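/- Let u₁, u₂ ∈ ℝ³ be unit vectors and let v₁, v₂ ∈ ℝ³ be orthonormal vectors. Let O := (1/√2)((u₁·σ) ⊗ (v₁·σ) + (u₂·σ) ⊗ (v₂·σ)). Then 1 + ‖u₁ × u₂‖ is an eigenvalue of O² (it lies in the spectrum of O²), and every eigenvalue λ of O² satisfies λ ≤ 1 + ‖u₁ × u₂‖. (For unit vectors, ‖u₁ × u₂‖ = |sin θ| where θ is the angle between u₁ and u₂.) -/

import Mathlib

open Matrix Kronecker Complex

/-- The Pauli matrix σ₁. -/
noncomputable def σ1 : Matrix (Fin 2) (Fin 2) ℂ := !![0, 1; 1, 0]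

/-- The Pauli matrix σ₂. -/
noncomputable def σ2 : Matrix (Fin 2) (Fin 2) ℂ := !![0, -Complex.I; Complex.I, 0]

/-- The Pauli matrix σ₃. -/
noncomputable def σ3 : Matrix (Fin 2) (Fin 2) ℂ := !![1, 0; 0, -1]

/-- For `a ∈ ℝ³`, the observable `a·σ = a₁σ₁ + a₂σ₂ + a₃σ₃`. -/
noncomputable def pauliDot (a : Fin 3 → ℝ) : Matrix (Fin 2) (Fin 2) ℂ :=
  (a 0 : ℂ) • σ1 + (a 1 : ℂ) • σ2 + (a 2 : ℂ) • σ3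

/-- The Euclidean norm of a vector in `ℝ³`. -/
noncomputable def enorm3 (a : Fin 3 → ℝ) : ℝ := Real.sqrt (a ⬝ᵥ a)

/-! Writing `W = (u₁ × u₂)·σ` and `Z = (v₁ × v₂)·σ`, the Pauli product rule
`(a·σ)(b·σ) = (a ⬝ b) 1 + i (a × b)·σ` gives `O² = 1 - W ⊗ Z`, because the unit vectors
square to `1`, `v₁·σ` and `v₂·σ` anticommute, and `v₁ × v₂` is a unit vector.
Then `(W ⊗ Z)² = ‖u₁ × u₂‖² 1`, so the spectrum of `W ⊗ Z` lies in `{±‖u₁ × u₂‖}`, and it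
contains `-‖u₁ × u₂‖` since `W ⊗ Z` is traceless. -/

lemma pauliDot_mul_pauliDot (a b : Fin 3 → ℝ) :
    pauliDot a * pauliDot b = ((a ⬝ᵥ b : ℝ) : ℂ) • 1 + I • pauliDot (a ⨯₃ b) := by
  ext i j
  fin_cases i <;> fin_cases j <;>
    simp [pauliDot, σ1, σ2, σ3, Matrix.mul_apply, cross_apply, dotProduct, Fin.sum_univ_three] <;>
    ring_nf <;> simp only [I_sq] <;> ring

lemma pauliDot_neg (a : Fin 3 → ℝ) : pauliDot (-a) = -pauliDot a := by
  simp only [pauliDot, Pi.neg_apply, ofReal_neg, neg_smul]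
  abel

lemma pauliDot_mul_self (a : Fin 3 → ℝ) : pauliDot a * pauliDot a = ((a ⬝ᵥ a : ℝ) : ℂ) • 1 := by
  rw [pauliDot_mul_pauliDot, cross_self]
  simp [pauliDot]

lemma pauliDot_mul_pauliDot_sub (a b : Fin 3 → ℝ) :
    pauliDot a * pauliDot b - pauliDot b * pauliDot a = (2 * I) • pauliDot (a ⨯₃ b) := by
  rw [pauliDot_mul_pauliDot, pauliDot_mul_pauliDot, dotProduct_comm, ← cross_anticomm,
    pauliDot_neg]
  module

lemma pauliDot_anticomm_of_dotProduct_eq_zero {a b : Fin 3 → ℝ} (h : a ⬝ᵥ b = 0) :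
    pauliDot b * pauliDot a = -(pauliDot a * pauliDot b) := by
  rw [pauliDot_mul_pauliDot, pauliDot_mul_pauliDot, dotProduct_comm, h, ← cross_anticomm,
    pauliDot_neg]
  simp

lemma trace_pauliDot (a : Fin 3 → ℝ) : (pauliDot a).trace = 0 := by
  simp [pauliDot, σ1, σ2, σ3, Matrix.trace_fin_two]

lemma enorm3_sq (a : Fin 3 → ℝ) : enorm3 a ^ 2 = a ⬝ᵥ a :=
  Real.sq_sqrt (by simpa using dotProduct_self_star_nonneg a)

lemma Matrix.kronecker_add_kronecker_sq {R m n : Type*} [CommRing R] [Fintype m] [DecidableEq m]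
    [Fintype n] [DecidableEq n] {A₁ A₂ : Matrix m m R} {B₁ B₂ : Matrix n n R}
    (hA₁ : A₁ * A₁ = 1) (hA₂ : A₂ * A₂ = 1) (hB₁ : B₁ * B₁ = 1) (hB₂ : B₂ * B₂ = 1)
    (hB : B₂ * B₁ = -(B₁ * B₂)) :
    (A₁ ⊗ₖ B₁ + A₂ ⊗ₖ B₂) ^ 2 = 2 + (A₁ * A₂ - A₂ * A₁) ⊗ₖ (B₁ * B₂) := by
  rw [sq, add_mul, mul_add, mul_add, ← mul_kronecker_mul, ← mul_kronecker_mul,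
    ← mul_kronecker_mul, ← mul_kronecker_mul, hA₁, hA₂, hB₁, hB₂, hB, one_kronecker_one,
    ← neg_one_smul R (B₁ * B₂), kronecker_smul, sub_eq_add_neg, ← neg_one_smul R (A₂ * A₁),
    add_kronecker, smul_kronecker, ← one_add_one_eq_two]
  abel

lemma spectrum.eq_or_eq_neg_of_sq_eq {𝕜 A : Type*} [Field 𝕜] [Ring A] [Algebra 𝕜 A]
    [Nontrivial A] {M : A} {c μ : 𝕜} (hM : M ^ 2 = algebraMap 𝕜 A (c ^ 2))
    (hμ : μ ∈ spectrum 𝕜 M) : μ = c ∨ μ = -c := by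
  have := spectrum.pow_mem_pow M 2 hμ
  rwa [hM, spectrum.scalar_eq, Set.mem_singleton_iff, sq_eq_sq_iff_eq_or_eq_neg] at this

lemma Matrix.neg_mem_spectrum_of_sq_eq_of_trace_eq_zero {n 𝕜 : Type*} [Fintype n]
    [DecidableEq n] [Nonempty n] [Field 𝕜] [CharZero 𝕜] {M : Matrix n n 𝕜} {c : 𝕜}
    (hM : M ^ 2 = algebraMap 𝕜 _ (c ^ 2)) (htr : M.trace = 0) : -c ∈ spectrum 𝕜 M := by
  rw [spectrum.mem_iff]
  -- `(-c - M)(c - M) = M² - c² = 0`, so invertibility of `-c - M` would force the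
  -- traceless `M` to be the scalar `c`, hence `c = 0` and `M = 0`.
  intro hunit
  have hfactor : (algebraMap 𝕜 _ (-c) - M) * (algebraMap 𝕜 _ c - M) = 0 := by
    rw [map_pow] at hM
    simp only [map_neg, sub_mul, mul_sub, neg_mul, Algebra.commutes c M, ← sq, hM]
    abel
  have hMc : M = algebraMap 𝕜 _ c := (sub_eq_zero.mp (hunit.mul_right_eq_zero.mp hfactor)).symm
  have hc : c = 0 := by
    simpa [hMc, Matrix.algebraMap_eq_diagonal, Fintype.card_ne_zero] using htr
  simp [hMc, hc] at hunit

lemma pauliDot_kronecker_add_sq {u₁ u₂ v₁ v₂ : Fin 3 → ℝ} (hu₁ : u₁ ⬝ᵥ u₁ = 1)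
    (hu₂ : u₂ ⬝ᵥ u₂ = 1) (hv₁ : v₁ ⬝ᵥ v₁ = 1) (hv₂ : v₂ ⬝ᵥ v₂ = 1) (hv₁₂ : v₁ ⬝ᵥ v₂ = 0) :
    (pauliDot u₁ ⊗ₖ pauliDot v₁ + pauliDot u₂ ⊗ₖ pauliDot v₂) ^ 2 =
      (2 : ℂ) • (1 - pauliDot (u₁ ⨯₃ u₂) ⊗ₖ pauliDot (v₁ ⨯₃ v₂)) := by
  have hsq {a : Fin 3 → ℝ} (ha : a ⬝ᵥ a = 1) : pauliDot a * pauliDot a = 1 := by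
    simp [pauliDot_mul_self, ha]
  rw [Matrix.kronecker_add_kronecker_sq (hsq hu₁) (hsq hu₂) (hsq hv₁) (hsq hv₂)
    (pauliDot_anticomm_of_dotProduct_eq_zero hv₁₂), pauliDot_mul_pauliDot_sub,
    pauliDot_mul_pauliDot, hv₁₂, smul_kronecker]
  simp only [ofReal_zero, zero_smul, zero_add, kronecker_smul, smul_smul]
  rw [show 2 * I * I = -2 by linear_combination 2 * I_sq, smul_sub,
    ofNat_smul_eq_nsmul ℂ 2 (1 : Matrix _ _ ℂ), two_nsmul, one_add_one_eq_two]
  module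

open ComplexOrder in
/-- For unit vectors `u₁, u₂` and orthonormal `v₁, v₂`, the largest eigenvalue of `O²` is
`1 + ‖u₁ × u₂‖`: it lies in the spectrum, and every eigenvalue of `O²` is at most this value. -/
theorem steering_op_sq_largest_eigenvalue (u₁ u₂ v₁ v₂ : Fin 3 → ℝ)
    (hu₁ : u₁ ⬝ᵥ u₁ = 1) (hu₂ : u₂ ⬝ᵥ u₂ = 1) (hv₁ : v₁ ⬝ᵥ v₁ = 1) (hv₂ : v₂ ⬝ᵥ v₂ = 1)
    (hv₁₂ : v₁ ⬝ᵥ v₂ = 0)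
    (O : Matrix (Fin 2 × Fin 2) (Fin 2 × Fin 2) ℂ)
    (hO : O = ((1 / Real.sqrt 2 : ℝ) : ℂ) •
      (pauliDot u₁ ⊗ₖ pauliDot v₁ + pauliDot u₂ ⊗ₖ pauliDot v₂)) :
    ((1 + enorm3 (crossProduct u₁ u₂) : ℝ) : ℂ) ∈ spectrum ℂ (O ^ 2) ∧
      ∀ lam : ℂ, lam ∈ spectrum ℂ (O ^ 2) →
        lam ≤ ((1 + enorm3 (crossProduct u₁ u₂) : ℝ) : ℂ) := by
  set s := enorm3 (u₁ ⨯₃ u₂)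
  set M := pauliDot (u₁ ⨯₃ u₂) ⊗ₖ pauliDot (v₁ ⨯₃ v₂)
  have hOsq : O ^ 2 = 1 - M := by
    have hc : (((1 / √2 : ℝ) : ℂ)) ^ 2 * 2 = 1 := by
      rw [← ofReal_pow, div_pow, Real.sq_sqrt zero_le_two]; push_cast; norm_num
    rw [hO, smul_pow, pauliDot_kronecker_add_sq hu₁ hu₂ hv₁ hv₂ hv₁₂, smul_smul, hc, one_smul]
  have hM : M ^ 2 = algebraMap ℂ _ ((s : ℂ) ^ 2) := by
    have hz : v₁ ⨯₃ v₂ ⬝ᵥ v₁ ⨯₃ v₂ = 1 := by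
      rw [cross_dot_cross, hv₁, hv₂, dotProduct_comm v₂ v₁, hv₁₂]; ring
    rw [sq, ← mul_kronecker_mul, pauliDot_mul_self, pauliDot_mul_self, hz, ← ofReal_pow,
      enorm3_sq, Algebra.algebraMap_eq_smul_one]
    simp [smul_kronecker]
  have hM_trace : M.trace = 0 := by simp [M, trace_kronecker, trace_pauliDot]
  have hspec : spectrum ℂ (O ^ 2) = (1 - ·) '' spectrum ℂ M := by
    rw [hOsq, ← map_one (algebraMap ℂ _), ← spectrum.singleton_sub_eq, Set.singleton_sub]
  refine ⟨?_, ?_⟩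
  · rw [hspec]
    exact ⟨-s, Matrix.neg_mem_spectrum_of_sq_eq_of_trace_eq_zero hM hM_trace, by push_cast; ring⟩
  · rw [hspec]
    rintro _ ⟨μ, hμ, rfl⟩
    have hs : 0 ≤ s := Real.sqrt_nonneg _
    rcases spectrum.eq_or_eq_neg_of_sq_eq hM hμ with rfl | rfl <;> dsimp only
    · exact_mod_cast (by linarith : 1 - s ≤ 1 + s)
    · push_cast
      rw [sub_neg_eq_add]
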